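/- For N ≥ 3 odd and k ∈ [1,N−1], and any two-element subset {i,j} of [1,N−2] with (i<j, j−i odd) or (i>j, i≡j mod 2): there exists c ∈ {0,1} such that ⌊ι_k(i), ι_k(j)⌋ = ι_k(⌊i,j⌋) + c·{k,k+1} in E_N, i.e., the symmetric difference of ⌊ι_k(i),ι_k(j)⌋ and the image ι_k(⌊i,j⌋) is either empty or equal to {k,k+1}. -/

import Mathlib

/-!
`ι_k` is an order embedding of `[1, N-2]` into `[1, N]` whose image misses exactly `{k, k+1}`,
and it maps every arc `⌊i,j⌋` onto the arc `⌊ι_k i, ι_k j⌋` with that pair removed. Since `k` and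
`k+1` are adjacent, an arc contains either both or neither of them, so the symmetric difference
is `⌊ι_k i, ι_k j⌋ ∩ {k, k+1}`, which is `∅` or `{k, k+1}`.
-/

def iota (k i : ℕ) : ℕ := if i < k then i else i + 2

/-- `⌊i,j⌋_M ⊆ [1,M]`. -/
def arcSet (M i j : ℕ) : Finset ℕ :=
  if i < j then Finset.Icc i j else Finset.Icc i M ∪ Finset.Icc 1 j

theorem symmDiff_sdiff_right_self {α : Type*} [GeneralizedBooleanAlgebra α] (a b : α) :
    symmDiff a (a \ b) = a ⊓ b := by
  rw [symmDiff_of_ge sdiff_le, sdiff_sdiff_right_self]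

theorem Finset.inter_pair_eq_empty_or_eq {α : Type*} [DecidableEq α] {s : Finset α} {a b : α}
    (h : a ∈ s ↔ b ∈ s) : s ∩ {a, b} = ∅ ∨ s ∩ {a, b} = {a, b} := by
  by_cases ha : a ∈ s
  · refine .inr (Finset.inter_eq_right.mpr ?_)
    exact Finset.insert_subset ha (Finset.singleton_subset_iff.mpr (h.mp ha))
  · refine .inl (Finset.disjoint_iff_inter_eq_empty.mp ?_)
    simp [ha, h.not.mp ha]

theorem mem_arcSet {M i j x : ℕ} : x ∈ arcSet M i j ↔
    if i < j then i ≤ x ∧ x ≤ j else (i ≤ x ∧ x ≤ M) ∨ (1 ≤ x ∧ x ≤ j) := by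
  unfold arcSet
  split_ifs <;> simp

theorem mem_image_iota {k x : ℕ} {s : Finset ℕ} :
    x ∈ s.image (iota k) ↔ (x < k ∧ x ∈ s) ∨ (k + 2 ≤ x ∧ x - 2 ∈ s) := by
  simp only [Finset.mem_image, iota]
  constructor
  · rintro ⟨y, hy, rfl⟩
    split_ifs with h
    · exact .inl ⟨h, hy⟩
    · exact .inr ⟨by omega, by simpa using hy⟩
  · rintro (⟨hx, hxs⟩ | ⟨hx, hxs⟩)
    · exact ⟨x, hxs, if_pos hx⟩
    · exact ⟨x - 2, hxs, by rw [if_neg (by omega)]; omega⟩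

theorem image_iota_arcSet {M k i j : ℕ} (hk : 1 ≤ k) (hkM : k ≤ M + 1) :
    (arcSet M i j).image (iota k) = arcSet (M + 2) (iota k i) (iota k j) \ {k, k + 1} := by
  ext x
  simp only [mem_image_iota, Finset.mem_sdiff, mem_arcSet, iota, Finset.mem_insert,
    Finset.mem_singleton]
  split_ifs <;> omega

theorem mem_arcSet_iota_iff_succ_mem {M k i j : ℕ} (hk : 1 ≤ k) (hkM : k < M) :
    k ∈ arcSet M (iota k i) (iota k j) ↔ k + 1 ∈ arcSet M (iota k i) (iota k j) := by
  simp only [mem_arcSet, iota]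
  split_ifs <;> omega

theorem stmt16_general (N k i j : ℕ) (hN3 : 3 ≤ N)
    (hk1 : 1 ≤ k) (hk2 : k ≤ N - 1) :
    symmDiff (arcSet N (iota k i) (iota k j)) ((arcSet (N - 2) i j).image (iota k)) = ∅ ∨
    symmDiff (arcSet N (iota k i) (iota k j)) ((arcSet (N - 2) i j).image (iota k))
      = ({k, k + 1} : Finset ℕ) := by
  obtain ⟨M, rfl⟩ : ∃ M, N = M + 2 := ⟨N - 2, by omega⟩
  rw [Nat.add_sub_cancel, image_iota_arcSet hk1 (by omega), symmDiff_sdiff_right_self]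
  exact Finset.inter_pair_eq_empty_or_eq (mem_arcSet_iota_iff_succ_mem hk1 (by omega))

/-- for odd `N ≥ 3`, `k ∈ [1,N−1]`, and a two-element subset
`{i,j}` of `[1,N−2]` with (`i<j`, `j−i` odd) or (`i>j`, `i ≡ j mod 2`):
`⌊ι_k(i), ι_k(j)⌋ = ι_k(⌊i,j⌋) + c·{k,k+1}` for some `c ∈ {0,1}`, i.e. the
symmetric difference of `⌊ι_k(i), ι_k(j)⌋` (in `[1,N]`) and the image
`ι_k(⌊i,j⌋)` (of `⌊i,j⌋` taken in `[1,N−2]`) is `∅` or `{k,k+1}`. -/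
theorem stmt16 (N k i j : ℕ) (hN : Odd N) (hN3 : 3 ≤ N)
    (hk1 : 1 ≤ k) (hk2 : k ≤ N - 1)
    (hi : 1 ≤ i) (hi2 : i ≤ N - 2) (hj : 1 ≤ j) (hj2 : j ≤ N - 2)
    (hij : (i < j ∧ (j - i) % 2 = 1) ∨ (j < i ∧ i % 2 = j % 2)) :
    symmDiff (arcSet N (iota k i) (iota k j)) ((arcSet (N - 2) i j).image (iota k)) = ∅ ∨
    symmDiff (arcSet N (iota k i) (iota k j)) ((arcSet (N - 2) i j).image (iota k))
      = ({k, k + 1} : Finset ℕ) :=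
  stmt16_general N k i j hN3 hk1 hk2
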